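/- Let s, ν, a be real numbers with 0 < s < 2ν and |a| < 1. Then the Mellin transform ∫₀^∞ x^{s−1} / [(x+1)² + a²]^ν dx equals B(s, 2ν−s) · ₂F₁(ν − s/2, ν + (1−s)/2; ν + 1/2; −a²). -/

import Mathlib

/-!
Write `(x + 1)² + a² = (1 + x)² (1 + a² / (1 + x)²)` and expand the second factor by the
binomial series. The `n`-th term is a multiple of the Mellin–Beta integral
`∫₀^∞ x^{s-1} (1 + x)^{-2ν-2n} dx = B(s, 2ν + 2n - s)`, computed by the substitution
`x = u / (1 - u)`. Since `B(s, 2ν - s + 2n) ≤ B(s, 2ν - s)`, the series of integrals of absolute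
values is dominated by the binomial series at `a²`, so summation and integration commute.
Finally `B(s, y + 2n) = B(s, y) (y)_{2n} / (s + y)_{2n}`, and the duplication
`(c)_{2n} = 4ⁿ (c/2)_n ((c+1)/2)_n` turns the result into the series of `₂F₁`.
-/

open MeasureTheory Set

/-- Pochhammer symbol `(c)_n = c(c+1)⋯(c+n−1)` for a real `c`. -/
noncomputable def poch (c : ℝ) (n : ℕ) : ℝ := ∏ i ∈ Finset.range n, (c + i)

/-- The Gauss hypergeometric series `₂F₁(a,b;c;z)`. -/
noncomputable def hyp2F1 (a b c z : ℝ) : ℝ :=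
  ∑' n : ℕ, poch a n * poch b n / poch c n * z ^ n / n.factorial

/-- The Beta function `B(x,y) = Γ(x)Γ(y)/Γ(x+y)`. -/
noncomputable def betaFn (x y : ℝ) : ℝ := Real.Gamma x * Real.Gamma y / Real.Gamma (x + y)

lemma poch_succ (c : ℝ) (n : ℕ) : poch c (n + 1) = poch c n * (c + n) :=
  Finset.prod_range_succ _ _

lemma poch_pos {c : ℝ} (hc : 0 < c) (n : ℕ) : 0 < poch c n :=
  Finset.prod_pos fun _ _ => by positivity

lemma poch_le_poch {c d : ℝ} (hc : 0 ≤ c) (hcd : c ≤ d) (n : ℕ) : poch c n ≤ poch d n :=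
  Finset.prod_le_prod (fun _ _ => by positivity) fun _ _ => by linarith

lemma poch_two_mul (c : ℝ) (n : ℕ) :
    poch c (2 * n) = 4 ^ n * poch (c / 2) n * poch ((c + 1) / 2) n := by
  induction n with
  | zero => simp [poch]
  | succ n ih =>
    rw [show 2 * (n + 1) = 2 * n + 1 + 1 by ring, poch_succ, poch_succ, poch_succ, poch_succ, ih]
    push_cast
    ring

lemma ring_choose_neg_eq_poch (c : ℝ) (n : ℕ) :
    Ring.choose (-c) n = (-1) ^ n * poch c n / n.factorial := by
  have hprod : ∏ j ∈ Finset.range n, (-c - j) = (-1) ^ n * poch c n := by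
    simp only [poch, show ∀ j : ℕ, -c - j = -1 * (c + j) from fun j => by ring,
      Finset.prod_mul_distrib, Finset.prod_const, Finset.card_range]
  rw [Ring.choose_eq_smul, Polynomial.descPochhammer_smeval_eq_ascPochhammer,
    Polynomial.ascPochhammer_smeval_cast, Polynomial.ascPochhammer_smeval_eq_eval,
    ← descPochhammer_eval_eq_ascPochhammer, descPochhammer_eval_eq_prod_range, hprod,
    smul_eq_mul, inv_mul_eq_div]

lemma hasSum_one_add_rpow_neg (c : ℝ) {t : ℝ} (ht : |t| < 1) :
    HasSum (fun n : ℕ => (-1) ^ n * poch c n / n.factorial * t ^ n) ((1 + t) ^ (-c)) := by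
  have := Real.one_add_rpow_hasFPowerSeriesOnBall_zero (a := -c) |>.hasSum (y := t)
    (by simpa [Real.enorm_eq_ofReal_abs] using ht)
  simpa [binomialSeries, ring_choose_neg_eq_poch, mul_comm] using this

lemma summable_poch_div_factorial_mul_pow (c : ℝ) {r : ℝ} (hr : |r| < 1) :
    Summable (fun n : ℕ => poch c n / n.factorial * r ^ n) := by
  refine (hasSum_one_add_rpow_neg c (t := -r) (by rwa [abs_neg])).summable.congr fun n => ?_
  have hsq : ((-1 : ℝ) ^ n) ^ 2 = 1 := by rw [← pow_mul, mul_comm, pow_mul, neg_one_sq, one_pow]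
  rw [neg_pow]
  linear_combination (poch c n / n.factorial * r ^ n) * hsq

lemma hasSum_add_rpow_neg (c : ℝ) {q b : ℝ} (hb : |b| < q) :
    HasSum (fun n : ℕ => (-1) ^ n * poch c n / n.factorial * b ^ n * q ^ (-(c + n)))
      ((q + b) ^ (-c)) := by
  have hq : 0 < q := (abs_nonneg b).trans_lt hb
  have ht : |b / q| < 1 := by rwa [abs_div, abs_of_pos hq, div_lt_one hq]
  have hsplit : q + b = q * (1 + b / q) := by field_simp
  rw [hsplit, Real.mul_rpow hq.le (by linarith [(abs_lt.1 ht).1])]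
  refine ((hasSum_one_add_rpow_neg c ht).mul_left (q ^ (-c))).congr_fun fun n => ?_
  rw [neg_add, Real.rpow_add hq, Real.rpow_neg hq.le (n : ℝ), Real.rpow_natCast, div_pow]
  ring

lemma betaFn_eq_beta : betaFn = ProbabilityTheory.beta := rfl

lemma Gamma_add_nat_eq_mul_poch {y : ℝ} (hy : 0 < y) (n : ℕ) :
    Real.Gamma (y + n) = Real.Gamma y * poch y n := by
  induction n with
  | zero => simp [poch]
  | succ n ih =>
    rw [Nat.cast_succ, ← add_assoc, Real.Gamma_add_one (by positivity), ih, poch_succ]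
    ring

lemma betaFn_add_nat {x y : ℝ} (hx : 0 < x) (hy : 0 < y) (n : ℕ) :
    betaFn x (y + n) = betaFn x y * (poch y n / poch (x + y) n) := by
  have hxy : 0 < x + y := by linarith
  have := Real.Gamma_pos_of_pos hxy
  have := poch_pos hxy n
  rw [betaFn, betaFn, ← add_assoc, Gamma_add_nat_eq_mul_poch hy, Gamma_add_nat_eq_mul_poch hxy]
  field_simp

lemma betaFn_add_nat_le {x y : ℝ} (hx : 0 < x) (hy : 0 < y) (n : ℕ) :
    betaFn x (y + n) ≤ betaFn x y := by
  have hratio : poch y n / poch (x + y) n ≤ 1 :=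
    div_le_one_of_le₀ (poch_le_poch hy.le (by linarith) n) (poch_pos (by linarith) n).le
  rw [betaFn_add_nat hx hy, betaFn_eq_beta]
  exact mul_le_of_le_one_right (ProbabilityTheory.beta_pos hx hy).le hratio

lemma betaFn_add_two_mul_nat {x y : ℝ} (hx : 0 < x) (hy : 0 < y) (n : ℕ) :
    betaFn x (y + 2 * n) = betaFn x y *
      (poch (y / 2) n * poch ((y + 1) / 2) n /
        (poch ((x + y) / 2) n * poch ((x + y + 1) / 2) n)) := by
  have := poch_pos (c := (x + y) / 2) (by linarith) n
  have := poch_pos (c := (x + y + 1) / 2) (by linarith) n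
  rw [show y + 2 * (n : ℝ) = y + ((2 * n : ℕ) : ℝ) by push_cast; ring, betaFn_add_nat hx hy,
    poch_two_mul, poch_two_mul]
  field_simp

lemma betaIntegral_integrand_eq_ofReal (u v : ℝ) {x : ℝ} (hx : x ∈ Ioo (0 : ℝ) 1) :
    (x : ℂ) ^ ((u : ℂ) - 1) * (1 - (x : ℂ)) ^ ((v : ℂ) - 1)
      = ((x ^ (u - 1) * (1 - x) ^ (v - 1) : ℝ) : ℂ) := by
  rw [Complex.ofReal_mul, Complex.ofReal_cpow hx.1.le,
    Complex.ofReal_cpow (sub_nonneg.2 hx.2.le)]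
  push_cast
  ring

lemma integrableOn_rpow_mul_one_sub_rpow {u v : ℝ} (hu : 0 < u) (hv : 0 < v) :
    IntegrableOn (fun x : ℝ => x ^ (u - 1) * (1 - x) ^ (v - 1)) (Ioo 0 1) := by
  have hC := Complex.betaIntegral_convergent (u := u) (v := v) (by simpa) (by simpa)
  rw [intervalIntegrable_iff_integrableOn_Ioc_of_le zero_le_one] at hC
  refine IntegrableOn.congr_fun (hC.mono_set Ioo_subset_Ioc_self).re (fun x hx => ?_)
    measurableSet_Ioo
  simp [betaIntegral_integrand_eq_ofReal u v hx]

lemma integral_rpow_mul_one_sub_rpow {u v : ℝ} (hu : 0 < u) (hv : 0 < v) :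
    ∫ x in Ioo (0 : ℝ) 1, x ^ (u - 1) * (1 - x) ^ (v - 1) = betaFn u v := by
  have hC : Complex.betaIntegral u v
      = ((∫ x in Ioo (0 : ℝ) 1, x ^ (u - 1) * (1 - x) ^ (v - 1) : ℝ) : ℂ) := by
    rw [Complex.betaIntegral, intervalIntegral.integral_of_le zero_le_one,
      integral_Ioc_eq_integral_Ioo, ← integral_complex_ofReal]
    exact setIntegral_congr_fun measurableSet_Ioo fun x hx =>
      betaIntegral_integrand_eq_ofReal u v hx
  rw [betaFn_eq_beta, ProbabilityTheory.beta_eq_betaIntegralReal u v hu hv, hC, Complex.ofReal_re]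

lemma image_div_one_sub_Ioo : (fun u : ℝ => u / (1 - u)) '' Ioo 0 1 = Ioi 0 := by
  ext x
  constructor
  · rintro ⟨u, ⟨hu0, hu1⟩, rfl⟩
    exact div_pos hu0 (by linarith)
  · intro hx
    rw [mem_Ioi] at hx
    refine ⟨x / (1 + x), ⟨by positivity, by rw [div_lt_one (by linarith)]; linarith⟩, ?_⟩
    field_simp
    ring

lemma hasDerivWithinAt_div_one_sub {u : ℝ} (hu : u ∈ Ioo (0 : ℝ) 1) :
    HasDerivWithinAt (fun u => u / (1 - u)) (1 / (1 - u) ^ 2) (Ioo 0 1) u := by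
  have h1 : (1 : ℝ) - u ≠ 0 := by linarith [hu.2]
  refine (((hasDerivAt_id u).div ((hasDerivAt_const u 1).sub (hasDerivAt_id u)) h1).congr_deriv
    ?_).hasDerivWithinAt
  simp only [Pi.sub_apply, id]
  field_simp
  ring

lemma injOn_div_one_sub : InjOn (fun u : ℝ => u / (1 - u)) (Ioo 0 1) := by
  intro x hx y hy h
  rw [div_eq_div_iff (by linarith [hx.2]) (by linarith [hy.2])] at h
  linarith

lemma abs_deriv_mul_comp_div_one_sub {s p : ℝ} :
    EqOn (fun u : ℝ => |1 / (1 - u) ^ 2| • ((u / (1 - u)) ^ (s - 1) * (1 + u / (1 - u)) ^ (-p)))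
      (fun u => u ^ (s - 1) * (1 - u) ^ (p - s - 1)) (Ioo 0 1) := by
  rintro u ⟨hu0, hu1⟩
  have hy : 0 < 1 - u := by linarith
  have h1 : 1 + u / (1 - u) = (1 - u)⁻¹ := by field_simp; ring
  simp only [smul_eq_mul]
  rw [h1, Real.inv_rpow hy.le, Real.rpow_neg hy.le, inv_inv, Real.div_rpow hu0.le hy.le,
    abs_of_pos (by positivity), show p - s - 1 = p - ((s - 1) + (2 : ℕ)) by push_cast; ring,
    Real.rpow_sub hy p, Real.rpow_add hy, Real.rpow_natCast]
  field_simp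

lemma integrableOn_rpow_mul_one_add_rpow_neg {s p : ℝ} (hs : 0 < s) (hsp : s < p) :
    IntegrableOn (fun x : ℝ => x ^ (s - 1) * (1 + x) ^ (-p)) (Ioi 0) := by
  rw [← image_div_one_sub_Ioo, integrableOn_image_iff_integrableOn_abs_deriv_smul
      measurableSet_Ioo (fun _ => hasDerivWithinAt_div_one_sub) injOn_div_one_sub,
    integrableOn_congr_fun abs_deriv_mul_comp_div_one_sub measurableSet_Ioo]
  exact integrableOn_rpow_mul_one_sub_rpow hs (by linarith)

lemma integral_rpow_mul_one_add_rpow_neg {s p : ℝ} (hs : 0 < s) (hsp : s < p) :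
    ∫ x in Ioi (0 : ℝ), x ^ (s - 1) * (1 + x) ^ (-p) = betaFn s (p - s) := by
  rw [← image_div_one_sub_Ioo, integral_image_eq_integral_abs_deriv_smul
      measurableSet_Ioo (fun _ => hasDerivWithinAt_div_one_sub) injOn_div_one_sub,
    setIntegral_congr_fun measurableSet_Ioo abs_deriv_mul_comp_div_one_sub]
  exact integral_rpow_mul_one_sub_rpow hs (by linarith)

lemma integral_norm_const_mul_rpow_mul_one_add_rpow_neg (c : ℝ) {s p : ℝ} (hs : 0 < s)
    (hsp : s < p) :
    ∫ x in Ioi (0 : ℝ), ‖c * (x ^ (s - 1) * (1 + x) ^ (-p))‖ = |c| * betaFn s (p - s) := by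
  simp_rw [norm_mul, Real.norm_eq_abs, integral_const_mul]
  rw [← integral_rpow_mul_one_add_rpow_neg hs hsp]
  congr 1
  refine setIntegral_congr_fun measurableSet_Ioi fun x (hx : 0 < x) => ?_
  rw [← abs_mul, abs_of_nonneg (by positivity)]

section ExpansionTerms

variable {s ν a : ℝ}

noncomputable def binomialTerm (s ν a : ℝ) (n : ℕ) (x : ℝ) : ℝ :=
  (-1) ^ n * poch ν n / n.factorial * (a ^ 2) ^ n * (x ^ (s - 1) * (1 + x) ^ (-(2 * (ν + n))))

lemma hasSum_binomialTerm {x : ℝ} (hx : 0 ≤ x) (ha : |a| < 1) :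
    HasSum (binomialTerm s ν a · x) (x ^ (s - 1) / ((x + 1) ^ 2 + a ^ 2) ^ ν) := by
  have hb : |a ^ 2| < (1 + x) ^ 2 := by
    rw [abs_pow]
    nlinarith [abs_nonneg a]
  rw [div_eq_mul_inv, ← Real.rpow_neg (by positivity), add_comm x]
  refine ((hasSum_add_rpow_neg ν hb).mul_left (x ^ (s - 1))).congr_fun fun n => ?_
  rw [binomialTerm, ← Real.rpow_two (1 + x), ← Real.rpow_mul (by positivity)]
  ring_nf

lemma integrableOn_binomialTerm (hs : 0 < s) (hsν : s < 2 * ν) (n : ℕ) :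
    IntegrableOn (binomialTerm s ν a n) (Ioi 0) :=
  (integrableOn_rpow_mul_one_add_rpow_neg hs
    (by linarith [(Nat.cast_nonneg n : (0 : ℝ) ≤ n)])).const_mul _

lemma summable_integral_norm_binomialTerm (hs : 0 < s) (hsν : s < 2 * ν) (ha : |a| < 1) :
    Summable fun n => ∫ x in Ioi (0 : ℝ), ‖binomialTerm s ν a n x‖ := by
  have hν : 0 < ν := by linarith
  have ha2 : |a ^ 2| < 1 := by rw [abs_pow]; exact pow_lt_one₀ (abs_nonneg a) ha two_ne_zero
  refine Summable.of_nonneg_of_le (fun n => integral_nonneg fun _ => norm_nonneg _)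
    (fun n => ?_)
    ((summable_poch_div_factorial_mul_pow ν ha2).mul_right (betaFn s (2 * ν - s)))
  have hc : |(-1) ^ n * poch ν n / n.factorial * (a ^ 2) ^ n|
      = poch ν n / n.factorial * (a ^ 2) ^ n := by
    rw [abs_mul, abs_div, abs_mul, abs_pow, abs_neg, abs_one, one_pow, one_mul,
      abs_of_pos (poch_pos hν n), Nat.abs_cast, abs_of_nonneg (by positivity)]
  simp only [binomialTerm]
  rw [integral_norm_const_mul_rpow_mul_one_add_rpow_neg _ hs
    (by linarith [(Nat.cast_nonneg n : (0 : ℝ) ≤ n)]), hc]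
  refine mul_le_mul_of_nonneg_left ?_ (by have := poch_pos hν n; positivity)
  rw [show 2 * (ν + n) - s = 2 * ν - s + ((2 * n : ℕ) : ℝ) by push_cast; ring]
  exact betaFn_add_nat_le hs (by linarith) _

lemma integral_binomialTerm (hs : 0 < s) (hsν : s < 2 * ν) (n : ℕ) :
    ∫ x in Ioi (0 : ℝ), binomialTerm s ν a n x = betaFn s (2 * ν - s) *
      (poch (ν - s / 2) n * poch (ν + (1 - s) / 2) n / poch (ν + 1 / 2) n * (-a ^ 2) ^ n
        / n.factorial) := by
  have := poch_pos (c := ν) (by linarith) n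
  have := poch_pos (c := ν + 1 / 2) (by linarith) n
  simp only [binomialTerm]
  rw [integral_const_mul, integral_rpow_mul_one_add_rpow_neg hs
      (by linarith [(Nat.cast_nonneg n : (0 : ℝ) ≤ n)]),
    show 2 * (ν + n) - s = 2 * ν - s + 2 * n by ring, betaFn_add_two_mul_nat hs (by linarith),
    show (2 * ν - s) / 2 = ν - s / 2 by ring, show (2 * ν - s + 1) / 2 = ν + (1 - s) / 2 by ring,
    show (s + (2 * ν - s)) / 2 = ν by ring, show (s + (2 * ν - s) + 1) / 2 = ν + 1 / 2 by ring,
    neg_pow (a ^ 2)]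
  field_simp

end ExpansionTerms

/-- For `0 < s < 2ν` and `|a| < 1`:
`∫₀^∞ x^{s−1}/[(x+1)²+a²]^ν dx = B(s,2ν−s) ₂F₁(ν−s/2,ν+(1−s)/2;ν+1/2;−a²)`. -/
theorem mellin_transform_shifted_sq (s ν a : ℝ) (hs : 0 < s) (hsν : s < 2 * ν)
    (ha : |a| < 1) :
    ∫ x in Ioi (0:ℝ), x ^ (s - 1) / ((x + 1) ^ 2 + a ^ 2) ^ ν
      = betaFn s (2 * ν - s) *
          hyp2F1 (ν - s / 2) (ν + (1 - s) / 2) (ν + 1 / 2) (-a ^ 2) := by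
  calc ∫ x in Ioi (0:ℝ), x ^ (s - 1) / ((x + 1) ^ 2 + a ^ 2) ^ ν
      = ∫ x in Ioi (0:ℝ), ∑' n, binomialTerm s ν a n x :=
        setIntegral_congr_fun measurableSet_Ioi fun x (hx : 0 < x) =>
          (hasSum_binomialTerm hx.le ha).tsum_eq.symm
    _ = ∑' n, ∫ x in Ioi (0:ℝ), binomialTerm s ν a n x :=
        (integral_tsum_of_summable_integral_norm (integrableOn_binomialTerm hs hsν)
          (summable_integral_norm_binomialTerm hs hsν ha)).symm
    _ = _ := by
        rw [hyp2F1, ← tsum_mul_left]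
        exact tsum_congr (integral_binomialTerm hs hsν)
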